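/- Fix D₁, D₂ > 0, α > 2, μ > 0, P_c > 0, and for λ > 0 define m(λ) = inf_{x>0} [D₁ x^{α/2}(2^{D₂πλx} − 1) + P_c − μπλx]. If m(λ_a) ≤ 0 for some λ_a > 0, then m(λ_b) < 0 for all λ_b > λ_a. -/

import Mathlib

/-!
Only the product `λx` enters the exponential and the linear utility term, so replacing `x`
by `r x` with `r = λ_a / λ_b < 1` at density `λ_b` keeps both and shrinks the power `x^{α/2}`
by the factor `r^{α/2} < 1`: the Lagrangian drops by `D₁ (1 - r^{α/2}) x^{α/2} (2^{D₂πλ_a x} - 1)`.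
Since `P_c > 0`, every `x` with `L_{λ_a}(x) < P_c / 2` satisfies `x ≥ P_c / (2μπλ_a)`, so this
drop is bounded below by a constant `K > 0` along near-minimizers, and a point with
`L_{λ_a}(x) < K` gives `L_{λ_b}(r x) < 0`.
-/

open Real Set

theorem mul_log_le_rpow_sub_one {b : ℝ} (hb : 0 < b) (t : ℝ) : t * log b ≤ b ^ t - 1 := by
  rw [rpow_def_of_pos hb, mul_comm]
  linarith [add_one_le_exp (log b * t)]

theorem sub_one_le_rpow {x p : ℝ} (hx : 0 ≤ x) (hp : 1 ≤ p) : x - 1 ≤ x ^ p := by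
  rcases le_or_gt x 1 with hx1 | hx1
  · linarith [rpow_nonneg hx p]
  · calc x - 1 ≤ x ^ (1 : ℝ) := by rw [rpow_one]; linarith
      _ ≤ x ^ p := rpow_le_rpow_of_exponent_le hx1.le hp

theorem rpow_mul_two_rpow_sub_one_le {p c x y : ℝ} (hp : 0 ≤ p) (hc : 0 ≤ c) (hx : 0 ≤ x)
    (hxy : x ≤ y) : x ^ p * ((2 : ℝ) ^ (c * x) - 1) ≤ y ^ p * ((2 : ℝ) ^ (c * y) - 1) := by
  have h2 : (2 : ℝ) ^ (c * x) ≤ 2 ^ (c * y) :=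
    rpow_le_rpow_of_exponent_le one_le_two (mul_le_mul_of_nonneg_left hxy hc)
  have h1 : 1 ≤ (2 : ℝ) ^ (c * x) := one_le_rpow one_le_two (by positivity)
  exact mul_le_mul (rpow_le_rpow hx hxy hp) (by linarith) (by linarith)
    (rpow_nonneg (hx.trans hxy) p)

theorem mul_rpow_mul_two_rpow_sub_one_nonneg {D₁ D₂ α l x : ℝ} (hD₁ : 0 ≤ D₁) (hD₂ : 0 ≤ D₂)
    (hl : 0 ≤ l) (hx : 0 ≤ x) : 0 ≤ D₁ * x ^ (α / 2) * ((2 : ℝ) ^ (D₂ * π * l * x) - 1) := by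
  have : 1 ≤ (2 : ℝ) ^ (D₂ * π * l * x) := one_le_rpow one_le_two (by positivity)
  exact mul_nonneg (mul_nonneg hD₁ (rpow_nonneg hx _)) (by linarith)

section Lagrangian

variable (D₁ D₂ α μ Pc : ℝ)

noncomputable def lagrangian (l x : ℝ) : ℝ :=
  D₁ * x ^ (α / 2) * ((2 : ℝ) ^ (D₂ * π * l * x) - 1) + Pc - μ * π * l * x

variable {D₁ D₂ α μ Pc}

theorem bddBelow_lagrangian (hD₁ : 0 < D₁) (hD₂ : 0 < D₂) (hα : 2 ≤ α) {l : ℝ} (hl : 0 < l) :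
    BddBelow (lagrangian D₁ D₂ α μ Pc l '' Ioi 0) := by
  set a := D₁ * (D₂ * π * l) * log 2
  set b := μ * π * l
  have ha : 0 < a := by have := log_pos one_lt_two; positivity
  refine ⟨Pc - (a + b) ^ 2 / (4 * a), ?_⟩
  rintro _ ⟨x, hx, rfl⟩
  have hx : 0 ≤ x := le_of_lt hx
  -- `x^{α/2} ≥ x - 1` and `2^t - 1 ≥ t log 2` bound the power term below by `a (x² - x)`
  have hquad : a * (x ^ 2 - x) ≤ D₁ * x ^ (α / 2) * ((2 : ℝ) ^ (D₂ * π * l * x) - 1) := by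
    have := mul_le_mul (sub_one_le_rpow hx (by linarith : (1 : ℝ) ≤ α / 2))
      (mul_log_le_rpow_sub_one two_pos (D₂ * π * l * x)) (by positivity)
      (rpow_nonneg hx (α / 2))
    calc a * (x ^ 2 - x) = D₁ * ((x - 1) * (D₂ * π * l * x * log 2)) := by ring
      _ ≤ D₁ * (x ^ (α / 2) * ((2 : ℝ) ^ (D₂ * π * l * x) - 1)) :=
        mul_le_mul_of_nonneg_left this hD₁.le
      _ = _ := (mul_assoc _ _ _).symm
  have hsq : 0 ≤ (a + b) ^ 2 / (4 * a) + (a * x ^ 2 - (a + b) * x) := by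
    have : (a + b) ^ 2 / (4 * a) + (a * x ^ 2 - (a + b) * x)
        = (2 * a * x - (a + b)) ^ 2 / (4 * a) := by field_simp; ring
    rw [this]; positivity
  unfold lagrangian
  nlinarith

theorem lagrangian_mul_of_mul_eq {r la lb x : ℝ} (hr : 0 ≤ r) (hx : 0 ≤ x) (hrl : lb * r = la) :
    lagrangian D₁ D₂ α μ Pc lb (r * x) = lagrangian D₁ D₂ α μ Pc la x
      - D₁ * (1 - r ^ (α / 2)) * (x ^ (α / 2) * ((2 : ℝ) ^ (D₂ * π * la * x) - 1)) := by
  unfold lagrangian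
  rw [mul_rpow hr hx, ← hrl]
  ring_nf

theorem div_lt_of_lagrangian_lt_half (hD₁ : 0 ≤ D₁) (hD₂ : 0 ≤ D₂) (hμ : 0 < μ) {l x : ℝ}
    (hl : 0 < l) (hx : 0 ≤ x) (hL : lagrangian D₁ D₂ α μ Pc l x < Pc / 2) :
    Pc / (2 * μ * π * l) < x := by
  have := mul_rpow_mul_two_rpow_sub_one_nonneg (α := α) hD₁ hD₂ hl.le hx
  unfold lagrangian at hL
  rw [div_lt_iff₀ (by positivity)]
  linarith

theorem exists_lagrangian_neg_of_sInf_nonpos (hD₁ : 0 < D₁) (hD₂ : 0 < D₂) (hα : 0 < α)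
    (hμ : 0 < μ) (hPc : 0 < Pc) {la lb : ℝ} (hla : 0 < la) (hlab : la < lb)
    (hinf : sInf (lagrangian D₁ D₂ α μ Pc la '' Ioi 0) ≤ 0) :
    ∃ x > 0, lagrangian D₁ D₂ α μ Pc lb x < 0 := by
  have hlb : 0 < lb := hla.trans hlab
  set r := la / lb
  have hr0 : 0 < r := div_pos hla hlb
  have hr1 : 0 < 1 - r ^ (α / 2) :=
    sub_pos.2 (rpow_lt_one hr0.le ((div_lt_one hlb).mpr hlab) (half_pos hα))
  set gain := fun x : ℝ ↦
    D₁ * (1 - r ^ (α / 2)) * (x ^ (α / 2) * ((2 : ℝ) ^ (D₂ * π * la * x) - 1))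
  set δ := Pc / (2 * μ * π * la)
  have hK : 0 < gain δ := by
    have : 1 < (2 : ℝ) ^ (D₂ * π * la * δ) := one_lt_rpow one_lt_two (by positivity)
    have : 0 < δ ^ (α / 2) := by positivity
    simp only [gain]
    positivity
  obtain ⟨_, ⟨xa, hxa, rfl⟩, hLa⟩ :
      ∃ y ∈ lagrangian D₁ D₂ α μ Pc la '' Ioi 0, y < min (Pc / 2) (gain δ) :=
    exists_lt_of_csInf_lt ⟨_, mem_image_of_mem _ (mem_Ioi.2 one_pos)⟩
      (hinf.trans_lt (lt_min (half_pos hPc) hK))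
  have hxa : 0 < xa := hxa
  have hδ : δ ≤ xa := (div_lt_of_lagrangian_lt_half hD₁.le hD₂.le hμ hla hxa.le
    (hLa.trans_le (min_le_left _ _))).le
  have hgain : gain δ ≤ gain xa := mul_le_mul_of_nonneg_left
    (rpow_mul_two_rpow_sub_one_le (by positivity) (by positivity) (by positivity) hδ)
    (mul_nonneg hD₁.le hr1.le)
  refine ⟨r * xa, mul_pos hr0 hxa, ?_⟩
  rw [lagrangian_mul_of_mul_eq hr0.le hxa.le (mul_div_cancel₀ la hlb.ne')]
  linarith [min_le_right (Pc / 2) (gain δ)]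

end Lagrangian

/-- If the minimized Lagrangian `m(λ) = inf_{x>0} [D₁ x^{α/2}(2^{D₂πλx} − 1) + P_c − μπλx]`
is nonpositive at some `λ_a > 0`, then it is strictly negative for all `λ_b > λ_a`. -/
theorem stmt_8 (D₁ D₂ α μ Pc : ℝ) (hD₁ : 0 < D₁) (hD₂ : 0 < D₂) (hα : 2 < α)
    (hμ : 0 < μ) (hPc : 0 < Pc)
    (m : ℝ → ℝ)
    (hm : ∀ l, m l = sInf ((fun x : ℝ =>
      D₁ * x ^ (α / 2) * ((2 : ℝ) ^ (D₂ * π * l * x) - 1) + Pc - μ * π * l * x)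
        '' Set.Ioi 0))
    (la : ℝ) (hla : 0 < la) (hneg : m la ≤ 0) :
    ∀ lb > la, m lb < 0 := by
  have hm : ∀ l, m l = sInf (lagrangian D₁ D₂ α μ Pc l '' Ioi 0) := hm
  intro lb hlab
  obtain ⟨x, hx, hneg_lb⟩ := exists_lagrangian_neg_of_sInf_nonpos hD₁ hD₂ (by linarith) hμ hPc
    hla hlab (hm la ▸ hneg)
  rw [hm lb]
  exact (csInf_le (bddBelow_lagrangian hD₁ hD₂ hα.le (hla.trans hlab))
    (mem_image_of_mem _ hx)).trans_lt hneg_lb
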